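/- arXiv:1806.10406 — 4 statements merged into one kernel-verified Lean document; each statement's English description precedes it below -/
import Mathlib

section
/- Let k ≥ 1 be an integer and β(1),…,β(k) real numbers. For s ∈ {0,1,…,k} set f(s) = −s + Σ_{i=s+1}^k β(i), let B = max_{s∈{0,…,k}} f(s), and let r be the number of maximizers of f. Then there exist constants 0 < C₁ ≤ C₂ < ∞ and t₀ ≥ 2 such that for all real t ≥ t₀: C₁ · t^{k+B} (log t)^{r−1} ≤ Σ_{1 ≤ i₁ < i₂ < ⋯ < i_k ≤ t, i_q ∈ ℕ} ∏_{q=1}^k i_q^{β(q)} ≤ C₂ · t^{k+B} (log t)^{r−1}. -/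
open Finset Real

/-- `f k β s = -s + ∑_{i=s+1}^k β i`. -/
noncomputable def maxF (k : ℕ) (β : ℕ → ℝ) (s : ℕ) : ℝ :=
  -(s : ℝ) + ∑ i ∈ Finset.Icc (s + 1) k, β i

/-- `B = max_{s ∈ {0,…,k}} f s`. -/
noncomputable def maxB (k : ℕ) (β : ℕ → ℝ) : ℝ :=
  (Finset.range (k + 1)).sup' (by simp) (maxF k β)

/-- `r` = number of maximizers of `f` on `{0,…,k}`. -/
noncomputable def numMax (k : ℕ) (β : ℕ → ℝ) : ℕ :=
  ((Finset.range (k + 1)).filter fun s => maxF k β s = maxB k β).card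

/-!
Write `T k n` for the sum with `⌊t⌋` replaced by `n`. Splitting off the largest index gives
`T (k+1) n = ∑_{m ≤ n} m ^ β (k+1) * T k (m-1)`, and we show `T k n ≍ n ^ (k + B) (log n) ^ (r - 1)`
by induction on `k`. The inductive step needs the growth of `∑_{m ≤ n} m ^ a (log m) ^ p`: it is
`≍ n ^ (a+1) (log n) ^ p` for `a > -1`, `≍ (log n) ^ (p+1)` for `a = -1` (both by the mean value
theorem applied to a primitive of `x ^ a (log x) ^ p`, after which the sum telescopes) and bounded
for `a < -1`. With `a = β (k+1) + k + B_k` the three cases say that `B_k + β (k+1)` is larger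
than, equal to, or smaller than `f_{k+1}(k+1) = -(k+1)`, which is exactly how `B` and `r` change
from `k` to `k + 1`. Finally `⌊t⌋ ~ t`.
-/

lemma le_maxB (k : ℕ) (β : ℕ → ℝ) {s : ℕ} (hs : s ≤ k) : maxF k β s ≤ maxB k β :=
  le_sup' _ (mem_range.2 (Nat.lt_succ_of_le hs))

lemma exists_maxF_eq_maxB (k : ℕ) (β : ℕ → ℝ) : ∃ s ≤ k, maxF k β s = maxB k β := by
  obtain ⟨s, hs, h⟩ := exists_mem_eq_sup' nonempty_range_add_one (maxF k β)
  exact ⟨s, Nat.lt_succ_iff.1 (mem_range.1 hs), h.symm⟩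

lemma one_le_numMax (k : ℕ) (β : ℕ → ℝ) : 1 ≤ numMax k β := by
  obtain ⟨s, hs, h⟩ := exists_maxF_eq_maxB k β
  exact card_pos.2 ⟨s, mem_filter.2 ⟨mem_range.2 (Nat.lt_succ_of_le hs), h⟩⟩

lemma maxB_zero (β : ℕ → ℝ) : maxB 0 β = 0 := by
  simp [maxB, maxF]

lemma numMax_zero (β : ℕ → ℝ) : numMax 0 β = 1 := by
  simp [numMax, maxB, maxF]

lemma maxF_succ_of_le (β : ℕ → ℝ) {k s : ℕ} (hs : s ≤ k) :
    maxF (k + 1) β s = maxF k β s + β (k + 1) := by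
  rw [maxF, maxF, sum_Icc_succ_top (by omega)]
  ring

lemma maxF_self (k : ℕ) (β : ℕ → ℝ) : maxF k β k = -k := by
  simp [maxF]

lemma maxB_succ (k : ℕ) (β : ℕ → ℝ) :
    maxB (k + 1) β = max (maxB k β + β (k + 1)) (-(k + 1 : ℕ)) := by
  apply le_antisymm
  · refine sup'_le _ _ fun s hs => ?_
    rcases Nat.lt_succ_iff_lt_or_eq.1 (mem_range.1 hs) with h | rfl
    · rw [maxF_succ_of_le β (Nat.lt_succ_iff.1 h)]
      exact le_max_of_le_left (by linarith [le_maxB k β (Nat.lt_succ_iff.1 h)])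
    · exact (maxF_self _ β).trans_le (le_max_right _ _)
  · refine max_le ?_ ((maxF_self (k + 1) β).symm.trans_le (le_maxB _ β le_rfl))
    obtain ⟨s, hs, h⟩ := exists_maxF_eq_maxB k β
    rw [← h, ← maxF_succ_of_le β hs]
    exact le_maxB _ β (by omega)

lemma numMax_succ (k : ℕ) (β : ℕ → ℝ) :
    numMax (k + 1) β = #{s ∈ range (k + 1) | maxF k β s + β (k + 1) = maxB (k + 1) β}
      + if (-(k + 1 : ℕ) : ℝ) = maxB (k + 1) β then 1 else 0 := by
  rw [numMax, range_add_one, filter_insert, ← maxF_self (k + 1) β]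
  have hcongr : {s ∈ range (k + 1) | maxF (k + 1) β s = maxB (k + 1) β}
      = {s ∈ range (k + 1) | maxF k β s + β (k + 1) = maxB (k + 1) β} :=
    filter_congr fun s hs => by rw [maxF_succ_of_le β (Nat.lt_succ_iff.1 (mem_range.1 hs))]
  split_ifs <;> simp [hcongr]

lemma numMax_succ_of_gt (k : ℕ) (β : ℕ → ℝ) (h : (-(k + 1 : ℕ) : ℝ) < maxB k β + β (k + 1)) :
    numMax (k + 1) β = numMax k β := by
  have hB : maxB (k + 1) β = maxB k β + β (k + 1) := by rw [maxB_succ, max_eq_left h.le]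
  rw [numMax_succ, hB, if_neg h.ne, add_zero, numMax]
  simp only [add_left_inj]

lemma numMax_succ_of_eq (k : ℕ) (β : ℕ → ℝ) (h : maxB k β + β (k + 1) = (-(k + 1 : ℕ) : ℝ)) :
    numMax (k + 1) β = numMax k β + 1 := by
  have hB : maxB (k + 1) β = maxB k β + β (k + 1) := by rw [maxB_succ, h, max_self]
  rw [numMax_succ, hB, if_pos h.symm, numMax]
  simp only [add_left_inj]

lemma numMax_succ_of_lt (k : ℕ) (β : ℕ → ℝ) (h : maxB k β + β (k + 1) < (-(k + 1 : ℕ) : ℝ)) :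
    numMax (k + 1) β = 1 := by
  have hB : maxB (k + 1) β = -(k + 1 : ℕ) := by rw [maxB_succ, max_eq_right h.le]
  rw [numMax_succ, hB, if_pos rfl, add_eq_right, card_eq_zero, filter_eq_empty_iff]
  intro s hs
  linarith [le_maxB k β (Nat.lt_succ_iff.1 (mem_range.1 hs))]

theorem Fin.strictMono_snoc {α : Type*} [Preorder α] {k : ℕ} {y : Fin k → α} {m : α} :
    StrictMono (Fin.snoc y m : Fin (k + 1) → α) ↔ StrictMono y ∧ ∀ q, y q < m := by
  refine ⟨fun h => ⟨fun a b hab => ?_, fun q => ?_⟩, fun ⟨hy, hm⟩ a b hab => ?_⟩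
  · simpa using h (Fin.castSucc_lt_castSucc_iff.2 hab)
  · simpa using h (Fin.castSucc_lt_last q)
  · induction b using Fin.lastCases with
    | last =>
      induction a using Fin.lastCases with
      | last => exact absurd hab (lt_irrefl _)
      | cast a => simpa using hm a
    | cast b =>
      induction a using Fin.lastCases with
      | last => exact absurd hab (Fin.castSucc_lt_last b).not_gt
      | cast a => simpa using hy (Fin.castSucc_lt_castSucc_iff.1 hab)

def increasingTuples (k n : ℕ) : Finset (Fin k → ℕ) :=
  (Fintype.piFinset fun _ : Fin k => Icc 1 n).filter fun i => StrictMono i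

noncomputable def increasingTupleSum (k : ℕ) (β : ℕ → ℝ) (n : ℕ) : ℝ :=
  ∑ i ∈ increasingTuples k n, ∏ q : Fin k, (i q : ℝ) ^ β ((q : ℕ) + 1)

lemma snoc_mem_increasingTuples {k n m : ℕ} {y : Fin k → ℕ} :
    Fin.snoc y (m + 1) ∈ increasingTuples (k + 1) n ↔ m < n ∧ y ∈ increasingTuples k m := by
  simp only [increasingTuples, mem_filter, Fintype.mem_piFinset, Fin.strictMono_snoc,
    Fin.forall_fin_succ', Fin.snoc_castSucc, Fin.snoc_last, mem_Icc]
  constructor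
  · rintro ⟨⟨hy, -, hmn⟩, hmono, hlt⟩
    exact ⟨by omega, fun q => ⟨(hy q).1, Nat.lt_succ_iff.1 (hlt q)⟩, hmono⟩
  · rintro ⟨hmn, hy, hmono⟩
    exact ⟨⟨fun q => ⟨(hy q).1, (hy q).2.trans (by omega)⟩, by omega, by omega⟩, hmono,
      fun q => Nat.lt_succ_of_le (hy q).2⟩

lemma increasingTupleSum_zero (β : ℕ → ℝ) (n : ℕ) : increasingTupleSum 0 β n = 1 := by
  simp [increasingTupleSum, increasingTuples, Subsingleton.strictMono]

lemma increasingTupleSum_nonneg (k : ℕ) (β : ℕ → ℝ) (n : ℕ) : 0 ≤ increasingTupleSum k β n :=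
  sum_nonneg fun _ _ => prod_nonneg fun _ _ => rpow_nonneg (Nat.cast_nonneg _) _

lemma snoc_init_of_mem_increasingTuples {k n : ℕ} {i : Fin (k + 1) → ℕ}
    (hi : i ∈ increasingTuples (k + 1) n) : Fin.snoc (Fin.init i) (i (Fin.last k) - 1 + 1) = i := by
  have h1 : 1 ≤ i (Fin.last k) := (mem_Icc.1 (Fintype.mem_piFinset.1 (mem_filter.1 hi).1 _)).1
  rw [Nat.sub_add_cancel h1, Fin.snoc_init_self]

-- `m + 1` is the largest entry of the tuple.
lemma increasingTupleSum_succ (k : ℕ) (β : ℕ → ℝ) (n : ℕ) :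
    increasingTupleSum (k + 1) β n =
      ∑ m ∈ range n, ((m : ℝ) + 1) ^ β (k + 1) * increasingTupleSum k β m := by
  simp_rw [increasingTupleSum, mul_sum]
  rw [sum_sigma']
  refine sum_nbij' (fun i => ⟨i (Fin.last k) - 1, Fin.init i⟩) (fun p => Fin.snoc p.2 (p.1 + 1))
    (fun i hi => ?_) (fun p hp => ?_) (fun i hi => snoc_init_of_mem_increasingTuples hi)
    (fun p _ => by simp) (fun i hi => ?_)
  · rw [mem_sigma, mem_range, ← snoc_mem_increasingTuples, snoc_init_of_mem_increasingTuples hi]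
    exact hi
  · rw [mem_sigma, mem_range] at hp
    exact snoc_mem_increasingTuples.2 hp
  · conv_lhs => rw [← snoc_init_of_mem_increasingTuples hi]
    rw [Fin.prod_univ_castSucc, mul_comm]
    simp [Fin.init]

open Asymptotics Filter

namespace Asymptotics

theorem IsTheta.comp_tendsto {α β E F : Type*} [Norm E] [Norm F] {f : α → E} {g : α → F}
    {l : Filter α} {l' : Filter β} (h : f =Θ[l] g) {k : β → α} (hk : Tendsto k l' l) :
    (f ∘ k) =Θ[l'] (g ∘ k) :=
  ⟨h.1.comp_tendsto hk, h.2.comp_tendsto hk⟩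

theorem IsTheta.exists_le_mul_le {α : Type*} {l : Filter α} {f g : α → ℝ}
    (h : f =Θ[l] g) (hf : ∀ᶠ x in l, 0 ≤ f x) (hg : ∀ᶠ x in l, 0 ≤ g x) :
    ∃ C₁ C₂ : ℝ, 0 < C₁ ∧ C₁ ≤ C₂ ∧ ∀ᶠ x in l, C₁ * g x ≤ f x ∧ f x ≤ C₂ * g x := by
  obtain ⟨c, -, hc⟩ := h.1.exists_pos
  obtain ⟨c', hc'_pos, hc'⟩ := h.2.exists_pos
  refine ⟨c'⁻¹, max c c'⁻¹, inv_pos.2 hc'_pos, le_max_right _ _, ?_⟩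
  filter_upwards [hc.bound, hc'.bound, hf, hg] with x h₁ h₂ hfx hgx
  rw [Real.norm_of_nonneg hfx, Real.norm_of_nonneg hgx] at h₁ h₂
  refine ⟨?_, h₁.trans (mul_le_mul_of_nonneg_right (le_max_left _ _) hgx)⟩
  rwa [← div_eq_inv_mul, div_le_iff₀' hc'_pos]

theorem IsEquivalent.rpow_mul_log_pow {α : Type*} {l : Filter α} {x y : α → ℝ} (h : x ~[l] y)
    (hy : 0 ≤ y) (hy_tendsto : Tendsto y l atTop) (e : ℝ) (p : ℕ) :
    (fun t => x t ^ e * Real.log (x t) ^ p) ~[l] fun t => y t ^ e * Real.log (y t) ^ p :=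
  (h.rpow hy).mul ((h.log hy_tendsto).pow p)

theorem IsBigO.sum_range {u v : ℕ → ℝ} (h : u =O[atTop] v) (hv : ∀ᶠ i in atTop, 0 ≤ v i)
    (hv_one : (fun _ => (1 : ℝ)) =O[atTop] fun n => ∑ i ∈ range n, v i) :
    (fun n => ∑ i ∈ range n, u i) =O[atTop] fun n => ∑ i ∈ range n, v i := by
  obtain ⟨c, -, hc⟩ := h.exists_pos
  obtain ⟨N, hN⟩ := eventually_atTop.1 (hc.bound.and hv)
  set K := ∑ i ∈ range N, (‖u i‖ - c * v i)
  have hbound (n : ℕ) (hn : N ≤ n) :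
      ‖∑ i ∈ range n, u i‖ ≤ 1 * ‖K + c * ∑ i ∈ range n, v i‖ := by
    have htail : ∑ i ∈ Ico N n, (‖u i‖ - c * v i) ≤ 0 := sum_nonpos fun i hi => by
      obtain ⟨hui, hvi⟩ := hN i (mem_Ico.1 hi).1
      rw [Real.norm_of_nonneg hvi] at hui
      linarith
    calc ‖∑ i ∈ range n, u i‖ ≤ ∑ i ∈ range n, ‖u i‖ := norm_sum_le _ _
      _ = ∑ i ∈ range n, (‖u i‖ - c * v i) + c * ∑ i ∈ range n, v i := by
        rw [mul_sum, ← sum_add_distrib]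
        simp
      _ ≤ K + c * ∑ i ∈ range n, v i := by
        rw [← sum_range_add_sum_Ico _ hn]
        linarith
      _ ≤ 1 * ‖K + c * ∑ i ∈ range n, v i‖ := by
        rw [one_mul]
        exact le_norm_self _
  refine (IsBigO.of_bound 1 (eventually_atTop.2 ⟨N, hbound⟩)).trans ?_
  exact ((isBigO_const_one ℝ K atTop).trans hv_one).add ((isBigO_refl _ _).const_mul_left c)

theorem IsTheta.sum_range {u v : ℕ → ℝ} (h : u =Θ[atTop] v)
    (hu : ∀ᶠ i in atTop, 0 ≤ u i) (hv : ∀ᶠ i in atTop, 0 ≤ v i)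
    (hu_one : (fun _ => (1 : ℝ)) =O[atTop] fun n => ∑ i ∈ range n, u i)
    (hv_one : (fun _ => (1 : ℝ)) =O[atTop] fun n => ∑ i ∈ range n, v i) :
    (fun n => ∑ i ∈ range n, u i) =Θ[atTop] fun n => ∑ i ∈ range n, v i :=
  ⟨h.1.sum_range hv hv_one, h.2.sum_range hu hu_one⟩

theorem isBigO_one_sum_range {v : ℕ → ℝ} (hv : 0 ≤ v) {i₀ : ℕ} (hi₀ : 0 < v i₀) :
    (fun _ => (1 : ℝ)) =O[atTop] fun n => ∑ i ∈ range n, v i := by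
  refine IsBigO.of_bound (v i₀)⁻¹ (eventually_atTop.2 ⟨i₀ + 1, fun n hn => ?_⟩)
  have : v i₀ ≤ ∑ i ∈ range n, v i :=
    single_le_sum (fun i _ => hv i) (mem_range.2 (by omega))
  rw [norm_one, Real.norm_of_nonneg (hi₀.le.trans this), ← div_eq_inv_mul, le_div_iff₀ hi₀]
  linarith

end Asymptotics

lemma rpow_mul_log_pow_nonneg {x : ℝ} (hx : 1 ≤ x) (a : ℝ) (p : ℕ) : 0 ≤ x ^ a * log x ^ p := by
  positivity [log_nonneg hx, zero_lt_one.trans_le hx]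

lemma tendsto_natCast_add_one_atTop : Tendsto (fun i : ℕ => (i : ℝ) + 1) atTop atTop :=
  tendsto_atTop_add_const_right _ 1 tendsto_natCast_atTop_atTop

-- `∑_{m=1}^n m ^ a (log m) ^ p`, with `m = i + 1`.
noncomputable def powLogSum (a : ℝ) (p n : ℕ) : ℝ :=
  ∑ i ∈ range n, ((i : ℝ) + 1) ^ a * log ((i : ℝ) + 1) ^ p

lemma powLogSum_term_nonneg (a : ℝ) (p i : ℕ) : 0 ≤ ((i : ℝ) + 1) ^ a * log ((i : ℝ) + 1) ^ p :=
  rpow_mul_log_pow_nonneg (by linarith [i.cast_nonneg' (α := ℝ)]) a p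

lemma one_isBigO_powLogSum (a : ℝ) (p : ℕ) :
    (fun _ => (1 : ℝ)) =O[atTop] fun n => powLogSum a p n :=
  isBigO_one_sum_range (powLogSum_term_nonneg a p) (i₀ := 1) (by norm_num; positivity)

theorem powLogSum_isTheta_of_hasDerivAt {a : ℝ} {p : ℕ} {F F' : ℝ → ℝ}
    (hF : ∀ x, 0 < x → HasDerivAt F (F' x) x)
    (hF' : F' =Θ[atTop] fun x => x ^ a * log x ^ p) (hF'_nonneg : ∀ᶠ x in atTop, 0 ≤ F' x)
    (hF_tendsto : Tendsto F atTop atTop) (hF_zero : F 0 = 0) :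
    (fun n => powLogSum a p n) =Θ[atTop] fun n => F n := by
  have hmvt (i : ℕ) : ∃ ξ : ℝ, 1 ≤ i → ξ ∈ Set.Ioo (i : ℝ) (i + 1) ∧ F (i + 1) - F i = F' ξ := by
    by_cases hi : 1 ≤ i
    · have hi' : (0 : ℝ) < i := by exact_mod_cast hi
      obtain ⟨ξ, hξ, h⟩ := exists_hasDerivAt_eq_slope F F' (lt_add_one (i : ℝ))
        (fun x hx => (hF x (hi'.trans_le hx.1)).continuousAt.continuousWithinAt)
        (fun x hx => hF x (hi'.trans hx.1))
      exact ⟨ξ, fun _ => ⟨hξ, by rw [h, add_sub_cancel_left, div_one]⟩⟩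
    · exact ⟨0, fun h => absurd h hi⟩
  choose ξ hξ using hmvt
  have hξ_mem : ∀ᶠ i : ℕ in atTop, ξ i ∈ Set.Ioo (i : ℝ) (i + 1) :=
    eventually_atTop.2 ⟨1, fun i hi => (hξ i hi).1⟩
  have hξ_tendsto : Tendsto ξ atTop atTop :=
    tendsto_atTop_mono' _ (hξ_mem.mono fun i hi => hi.1.le) tendsto_natCast_atTop_atTop
  have hξ_equiv : ξ ~[atTop] fun i : ℕ => (i : ℝ) + 1 := by
    refine IsLittleO.isEquivalent (IsBigO.trans_isLittleO (g := fun _ => (1 : ℝ)) ?_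
      ((isLittleO_one_left_iff ℝ).2 (tendsto_norm_atTop_atTop.comp tendsto_natCast_add_one_atTop)))
    refine IsBigO.of_bound 1 (hξ_mem.mono fun i hi => ?_)
    rw [norm_one, mul_one, Pi.sub_apply, Real.norm_eq_abs, abs_le]
    constructor <;> linarith [hi.1, hi.2]
  have hdiff_eq : (fun i : ℕ => F (i + 1) - F i) =ᶠ[atTop] F' ∘ ξ :=
    eventually_atTop.2 ⟨1, fun i hi => (hξ i hi).2⟩
  have hdiff : (fun i : ℕ => F (i + 1) - F i) =Θ[atTop]
      fun i : ℕ => ((i : ℝ) + 1) ^ a * log ((i : ℝ) + 1) ^ p :=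
    hdiff_eq.trans_isTheta ((hF'.comp_tendsto hξ_tendsto).trans (hξ_equiv.rpow_mul_log_pow
      (fun i => by positivity) tendsto_natCast_add_one_atTop a p).isTheta)
  have htelescope : (fun n : ℕ => F n) = fun n => ∑ i ∈ range n, (F (i + 1) - F i) := by
    funext n
    simpa [hF_zero] using (sum_range_sub (fun i : ℕ => F i) n).symm
  have hF_one : (fun _ => (1 : ℝ)) =O[atTop] fun n : ℕ => F n :=
    ((isLittleO_one_left_iff ℝ).2
      (tendsto_norm_atTop_atTop.comp (hF_tendsto.comp tendsto_natCast_atTop_atTop))).isBigO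
  rw [htelescope] at hF_one ⊢
  refine hdiff.symm.sum_range (Eventually.of_forall (powLogSum_term_nonneg a p)) ?_
    (one_isBigO_powLogSum a p) hF_one
  filter_upwards [hdiff_eq, hξ_tendsto.eventually hF'_nonneg] with i hi hi'
  rwa [hi]

theorem powLogSum_isTheta_of_neg_one_lt {a : ℝ} (ha : -1 < a) (p : ℕ) :
    (fun n => powLogSum a p n) =Θ[atTop] fun n : ℕ => (n : ℝ) ^ (a + 1) * log n ^ p := by
  have ha' : 0 < a + 1 := by linarith
  have hR : (fun x : ℝ => p * (x ^ a * log x ^ (p - 1))) =o[atTop]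
      fun x => (a + 1) * (x ^ a * log x ^ p) := by
    refine IsLittleO.const_mul_right ha'.ne' ?_
    rcases p with _ | q
    · simp
    · have hlog := (isLittleO_pow_pow_atTop_of_lt (lt_add_one q)).comp_tendsto tendsto_log_atTop
      exact ((isBigO_refl _ _).mul_isLittleO hlog).const_mul_left _
  refine powLogSum_isTheta_of_hasDerivAt (F := fun x => x ^ (a + 1) * log x ^ p)
    (F' := fun x => (a + 1) * (x ^ a * log x ^ p) + p * (x ^ a * log x ^ (p - 1)))
    (fun x hx => ?_) ?_ ?_ ?_ (by simp [zero_rpow ha'.ne'])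
  · refine ((hasDerivAt_rpow_const (Or.inl hx.ne')).mul
      ((hasDerivAt_log hx.ne').fun_pow p)).congr_deriv ?_
    rw [add_sub_cancel_right, rpow_add_one hx.ne']
    field_simp
  · exact (IsEquivalent.refl.add_isLittleO hR).isTheta.trans
      ((isTheta_const_mul_left ha'.ne').2 (isTheta_refl _ _))
  · filter_upwards [eventually_ge_atTop 1] with x hx
    positivity [log_nonneg hx, zero_lt_one.trans_le hx]
  · refine tendsto_atTop_mono' _ ?_ (tendsto_rpow_atTop ha')
    filter_upwards [eventually_ge_atTop (exp 1)] with x hx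
    have hx0 : 0 < x := (exp_pos 1).trans_le hx
    have hlog : 1 ≤ log x := by rwa [le_log_iff_exp_le hx0]
    exact le_mul_of_one_le_right (by positivity) (one_le_pow₀ hlog)

theorem powLogSum_neg_one_isTheta (p : ℕ) :
    (fun n => powLogSum (-1) p n) =Θ[atTop] fun n : ℕ => log n ^ (p + 1) := by
  refine powLogSum_isTheta_of_hasDerivAt (F := fun x => log x ^ (p + 1))
    (F' := fun x => (p + 1) * (x ^ (-1 : ℝ) * log x ^ p)) (fun x hx => ?_) ?_ ?_ ?_ (by simp)
  · refine ((hasDerivAt_log hx.ne').fun_pow (p + 1)).congr_deriv ?_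
    rw [rpow_neg_one, Nat.add_sub_cancel]
    push_cast
    ring
  · exact (isTheta_const_mul_left (by positivity)).2 (isTheta_refl _ _)
  · filter_upwards [eventually_ge_atTop 1] with x hx
    positivity [log_nonneg hx, zero_lt_one.trans_le hx]
  · exact (tendsto_pow_atTop (Nat.succ_ne_zero p)).comp tendsto_log_atTop

theorem powLogSum_isTheta_one_of_lt_neg_one {a : ℝ} (ha : a < -1) (p : ℕ) :
    (fun n => powLogSum a p n) =Θ[atTop] fun _ => (1 : ℝ) := by
  have hbigO : (fun x : ℝ => x ^ a * log x ^ p) =O[atTop] fun x => x ^ ((a - 1) / 2) := by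
    have hlog := (isLittleO_log_rpow_rpow_atTop (p : ℝ) (by linarith : 0 < (-1 - a) / 2)).isBigO
    simp only [rpow_natCast] at hlog
    refine ((isBigO_refl (fun x : ℝ => x ^ a) atTop).mul hlog).congr' EventuallyEq.rfl ?_
    filter_upwards [eventually_gt_atTop 0] with x hx
    rw [← rpow_add hx]
    ring_nf
  have hsummable : Summable fun i : ℕ => ((i : ℝ) + 1) ^ a * log ((i : ℝ) + 1) ^ p := by
    refine summable_of_isBigO_nat ?_ (hbigO.comp_tendsto tendsto_natCast_add_one_atTop)
    exact_mod_cast (summable_nat_add_iff 1).2 (Real.summable_nat_rpow.2 (by linarith))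
  have hpos := hsummable.tsum_pos (powLogSum_term_nonneg a p) 1 (by norm_num; positivity)
  exact (isTheta_of_div_tendsto_nhds_ne_zero (f := fun _ => (1 : ℝ))
    (by simpa [powLogSum] using hsummable.hasSum.tendsto_sum_nat) hpos.ne').symm

theorem increasingTupleSum_succ_isTheta {k : ℕ} {β : ℕ → ℝ} {e : ℝ} {p : ℕ}
    (h : (fun n => increasingTupleSum k β n) =Θ[atTop] fun n : ℕ => (n : ℝ) ^ e * log n ^ p) :
    (fun n => increasingTupleSum (k + 1) β n) =Θ[atTop] fun n => powLogSum (β (k + 1) + e) p n := by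
  have hshift : (fun i : ℕ => (i : ℝ) ^ e * log i ^ p) ~[atTop]
      fun i : ℕ => ((i : ℝ) + 1) ^ e * log ((i : ℝ) + 1) ^ p :=
    (isEquivalent_of_tendsto_one (tendsto_natCast_div_add_atTop 1)).rpow_mul_log_pow
      (fun i => by positivity) tendsto_natCast_add_one_atTop e p
  have hterm : (fun i : ℕ => ((i : ℝ) + 1) ^ β (k + 1) * increasingTupleSum k β i) =Θ[atTop]
      fun i : ℕ => ((i : ℝ) + 1) ^ (β (k + 1) + e) * log ((i : ℝ) + 1) ^ p := by
    refine ((isTheta_refl _ _).mul (h.trans hshift.isTheta)).trans_eventuallyEq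
      (Eventually.of_forall fun i => ?_)
    simp only [rpow_add (by positivity : (0 : ℝ) < i + 1), mul_assoc]
  have hterm_nonneg (i : ℕ) : 0 ≤ ((i : ℝ) + 1) ^ β (k + 1) * increasingTupleSum k β i := by
    positivity [increasingTupleSum_nonneg k β i]
  obtain ⟨i₀, hi₀, hi₀_two⟩ := (h.eq_zero_iff.and (eventually_ge_atTop 2)).exists
  have hterm_pos : 0 < ((i₀ : ℝ) + 1) ^ β (k + 1) * increasingTupleSum k β i₀ := by
    have hlog : 0 < log i₀ := log_pos (by exact_mod_cast hi₀_two)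
    have hT : increasingTupleSum k β i₀ ≠ 0 := mt hi₀.1 (by positivity)
    positivity [(increasingTupleSum_nonneg k β i₀).lt_of_ne' hT]
  simp_rw [increasingTupleSum_succ]
  exact hterm.sum_range (Eventually.of_forall hterm_nonneg)
    (Eventually.of_forall (powLogSum_term_nonneg _ p))
    (isBigO_one_sum_range hterm_nonneg hterm_pos) (one_isBigO_powLogSum _ p)

theorem increasingTupleSum_isTheta (k : ℕ) (β : ℕ → ℝ) :
    (fun n => increasingTupleSum k β n) =Θ[atTop]
      fun n : ℕ => (n : ℝ) ^ ((k : ℝ) + maxB k β) * log n ^ (numMax k β - 1) := by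
  induction k with
  | zero => simp [increasingTupleSum_zero, maxB_zero, numMax_zero]
  | succ k ih =>
    have hsum := increasingTupleSum_succ_isTheta ih
    set a := β (k + 1) + ((k : ℝ) + maxB k β)
    set p := numMax k β - 1
    have hexp : a + 1 = (k + 1 : ℕ) + (maxB k β + β (k + 1)) := by
      push_cast
      ring
    rcases lt_trichotomy (-1) a with ha | ha | ha
    · have hgt : (-(k + 1 : ℕ) : ℝ) < maxB k β + β (k + 1) := by linarith
      rw [maxB_succ, max_eq_left hgt.le, numMax_succ_of_gt k β hgt, ← hexp]
      exact hsum.trans (powLogSum_isTheta_of_neg_one_lt ha p)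
    · have heq : maxB k β + β (k + 1) = (-(k + 1 : ℕ) : ℝ) := by linarith
      have hp : numMax k β = p + 1 := by have := one_le_numMax k β; omega
      rw [maxB_succ, heq, max_self, numMax_succ_of_eq k β heq, hp, add_neg_cancel]
      simp only [rpow_zero, one_mul, Nat.add_sub_cancel]
      rw [← ha] at hsum
      exact hsum.trans (powLogSum_neg_one_isTheta p)
    · have hlt : maxB k β + β (k + 1) < (-(k + 1 : ℕ) : ℝ) := by linarith
      rw [maxB_succ, max_eq_right hlt.le, numMax_succ_of_lt k β hlt, add_neg_cancel]
      simp only [rpow_zero, one_mul, Nat.sub_self, pow_zero]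
      exact hsum.trans (powLogSum_isTheta_one_of_lt_neg_one ha p)

theorem subgraph_sum_asymptotics_general (k : ℕ) (β : ℕ → ℝ) :
    ∃ C₁ C₂ t₀ : ℝ, 0 < C₁ ∧ C₁ ≤ C₂ ∧ 2 ≤ t₀ ∧ ∀ t : ℝ, t₀ ≤ t →
      C₁ * t ^ ((k : ℝ) + maxB k β) * (Real.log t) ^ (numMax k β - 1) ≤
        (∑ i ∈ (Fintype.piFinset fun _ : Fin k => Finset.Icc 1 (Nat.floor t)).filter
            (fun i => StrictMono i),
          ∏ q : Fin k, (i q : ℝ) ^ β ((q : ℕ) + 1)) ∧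
      (∑ i ∈ (Fintype.piFinset fun _ : Fin k => Finset.Icc 1 (Nat.floor t)).filter
            (fun i => StrictMono i),
          ∏ q : Fin k, (i q : ℝ) ^ β ((q : ℕ) + 1)) ≤
        C₂ * t ^ ((k : ℝ) + maxB k β) * (Real.log t) ^ (numMax k β - 1) := by
  have hfloor : (fun t : ℝ => increasingTupleSum k β ⌊t⌋₊) =Θ[atTop]
      fun t => t ^ ((k : ℝ) + maxB k β) * log t ^ (numMax k β - 1) :=
    ((increasingTupleSum_isTheta k β).comp_tendsto tendsto_nat_floor_atTop).trans
      (isEquivalent_nat_floor.symm.rpow_mul_log_pow (fun t => Nat.cast_nonneg _)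
        (tendsto_natCast_atTop_atTop.comp tendsto_nat_floor_atTop) _ _).isTheta_symm
  obtain ⟨C₁, C₂, hC₁, hC₁₂, hbounds⟩ := hfloor.exists_le_mul_le
    (Eventually.of_forall fun t => increasingTupleSum_nonneg k β ⌊t⌋₊)
    ((eventually_ge_atTop 1).mono fun t ht => rpow_mul_log_pow_nonneg ht _ _)
  obtain ⟨t₁, ht₁⟩ := eventually_atTop.1 hbounds
  refine ⟨C₁, C₂, max t₁ 2, hC₁, hC₁₂, le_max_right _ _, fun t ht => ?_⟩
  rw [mul_assoc, mul_assoc]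
  exact ht₁ t (le_of_max_le_left ht)

theorem subgraph_sum_asymptotics (k : ℕ) (hk : 1 ≤ k) (β : ℕ → ℝ) :
    ∃ C₁ C₂ t₀ : ℝ, 0 < C₁ ∧ C₁ ≤ C₂ ∧ 2 ≤ t₀ ∧ ∀ t : ℝ, t₀ ≤ t →
      C₁ * t ^ ((k : ℝ) + maxB k β) * (Real.log t) ^ (numMax k β - 1) ≤
        (∑ i ∈ (Fintype.piFinset fun _ : Fin k => Finset.Icc 1 (Nat.floor t)).filter
            (fun i => StrictMono i),
          ∏ q : Fin k, (i q : ℝ) ^ β ((q : ℕ) + 1)) ∧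
      (∑ i ∈ (Fintype.piFinset fun _ : Fin k => Finset.Icc 1 (Nat.floor t)).filter
            (fun i => StrictMono i),
          ∏ q : Fin k, (i q : ℝ) ^ β ((q : ℕ) + 1)) ≤
        C₂ * t ^ ((k : ℝ) + maxB k β) * (Real.log t) ^ (numMax k β - 1) :=
  subgraph_sum_asymptotics_general k β
end

section
/- Let k ≥ 1 be an integer and β(1),…,β(k) real numbers, with f as defined, and let s₁ be the smallest maximizer of f on {0,1,…,k}. If s₁ ≥ 1, then the iterated improper integral A₁ = ∫₁^∞ u₁^{β(1)} ( ∫_{u₁}^∞ u₂^{β(2)} ( ⋯ ( ∫_{u_{s₁−1}}^∞ u_{s₁}^{β(s₁)} du_{s₁} ) ⋯ ) du₂ ) du₁ is finite. -/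
open Finset Real MeasureTheory ENNReal

/-- `nestIoi β n j a` is the iterated improper integral
`∫_a^∞ u_j^{β j} ( ∫_{u_j}^∞ u_{j+1}^{β (j+1)} ( ⋯ ) du_{j+1} ) du_j`
with `n` nested integrals (indices `j, j+1, …, j+n-1`), taken in `ℝ≥0∞`. -/
noncomputable def nestIoi (β : ℕ → ℝ) : ℕ → ℕ → ℝ → ℝ≥0∞
  | 0, _, _ => 1
  | n + 1, j, a => ∫⁻ u in Set.Ioi a, ENNReal.ofReal (u ^ β j) * nestIoi β n (j + 1) u

lemma lintegral_Ioi_rpow_of_lt' {c : ℝ} (hc : c < -1) {a : ℝ} (ha : 0 < a) :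
    ∫⁻ u in Set.Ioi a, ENNReal.ofReal (u ^ c) = ENNReal.ofReal (-a ^ (c + 1) / (c + 1)) := by
  rw [← integral_Ioi_rpow_of_lt hc ha,
    ofReal_integral_eq_lintegral_ofReal (integrableOn_Ioi_rpow_of_lt hc ha)]
  filter_upwards [ae_restrict_mem measurableSet_Ioi] with x hx
  exact Real.rpow_nonneg (le_of_lt (ha.trans hx)) c

lemma Icc_eq_Ioc_pred {a b : ℕ} (ha : 1 ≤ a) : Finset.Icc a b = Finset.Ioc (a - 1) b := by
  rw [← Finset.Icc_add_one_left_eq_Ioc]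
  congr 1
  omega

lemma sum_Ioc_split (β : ℕ → ℝ) {a b c : ℕ} (h₁ : a ≤ b) (h₂ : b ≤ c) :
    (∑ i ∈ Finset.Ioc a b, β i) + ∑ i ∈ Finset.Ioc b c, β i = ∑ i ∈ Finset.Ioc a c, β i := by
  rw [← Finset.sum_union]
  · rw [Finset.Ioc_union_Ioc_eq_Ioc h₁ h₂]
  · simp only [Finset.disjoint_left, Finset.mem_Ioc]
    intro x hx hx2; omega

lemma nestIoi_bound (β : ℕ → ℝ) :
    ∀ n j : ℕ, 1 ≤ j →
      (∀ m, m < n → (∑ i ∈ Finset.Icc (j + m) (j + n - 1), β i) + ((n : ℝ) - m) < 0) →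
      ∃ C : ℝ≥0∞, C < ⊤ ∧ ∀ a : ℝ, 1 ≤ a →
        nestIoi β n j a ≤ C * ENNReal.ofReal
          (a ^ ((∑ i ∈ Finset.Icc j (j + n - 1), β i) + n)) := by
  intro n
  induction n with
  | zero =>
    intro j hj _
    refine ⟨1, one_lt_top, fun a ha => ?_⟩
    show (1 : ℝ≥0∞) ≤ _
    rw [Finset.Icc_eq_empty (by omega), Finset.sum_empty]
    simp
  | succ n ih =>
    intro j hj hcond
    obtain ⟨C, hC, hbound⟩ := ih (j + 1) (by omega) (by
      intro m hm
      have := hcond (m + 1) (by omega)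
      have h1 : j + (m + 1) = j + 1 + m := by omega
      have h2 : j + (n + 1) - 1 = j + 1 + n - 1 := by omega
      rw [h1, h2] at this
      push_cast at this ⊢
      linarith)
    set γ : ℝ := (∑ i ∈ Finset.Icc (j + 1) (j + 1 + n - 1), β i) + n with hγ
    set c : ℝ := β j + γ with hc
    have hIcc1 : Finset.Icc (j + 1) (j + 1 + n - 1) = Finset.Ioc j (j + n) ∨ n = 0 := by
      rcases Nat.eq_zero_or_pos n with h | h
      · right; exact h
      · left; rw [Icc_eq_Ioc_pred (by omega)]; congr 1 <;> omega
    have hIcc2 : Finset.Icc j (j + (n + 1) - 1) = Finset.Ioc (j - 1) (j + n) := by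
      rw [Icc_eq_Ioc_pred hj]; congr 1 <;> omega
    have hsingle : (∑ i ∈ Finset.Ioc (j - 1) j, β i) = β j := by
      rw [← Icc_eq_Ioc_pred hj, Finset.Icc_self, Finset.sum_singleton]
    have hcsum : c + 1 = (∑ i ∈ Finset.Icc j (j + (n + 1) - 1), β i) + ((n : ℝ) + 1) := by
      rw [hIcc2, ← sum_Ioc_split β (by omega : j - 1 ≤ j) (by omega : j ≤ j + n), hsingle]
      rcases hIcc1 with h | h
      · rw [hc, hγ, h]; ring
      · subst h
        rw [hc, hγ, Finset.Icc_eq_empty (by omega), Finset.sum_empty,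
          Finset.Ioc_eq_empty (by omega), Finset.sum_empty]
        push_cast; ring
    have hlt : c < -1 := by
      have h0 := hcond 0 (by omega)
      push_cast at h0
      simp only [sub_zero, add_zero] at h0
      nlinarith [hcsum]
    refine ⟨C * ENNReal.ofReal (-1 / (c + 1)), ENNReal.mul_lt_top hC ofReal_lt_top, ?_⟩
    intro a ha
    have hapos : (0:ℝ) < a := lt_of_lt_of_le one_pos ha
    have key : nestIoi β (n+1) j a ≤ C * ∫⁻ u in Set.Ioi a, ENNReal.ofReal (u ^ c) := by
      show (∫⁻ u in Set.Ioi a, ENNReal.ofReal (u ^ β j) * nestIoi β n (j + 1) u) ≤ _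
      rw [← lintegral_const_mul' _ _ hC.ne]
      refine lintegral_mono_ae ?_
      filter_upwards [ae_restrict_mem measurableSet_Ioi] with u hu
      have hu1 : (1:ℝ) ≤ u := le_of_lt (lt_of_le_of_lt ha hu)
      have hu0 : (0:ℝ) < u := lt_of_lt_of_le one_pos hu1
      calc ENNReal.ofReal (u ^ β j) * nestIoi β n (j + 1) u
          ≤ ENNReal.ofReal (u ^ β j) * (C * ENNReal.ofReal (u ^ γ)) :=
            mul_le_mul_right (hbound u hu1) _
        _ = C * (ENNReal.ofReal (u ^ β j) * ENNReal.ofReal (u ^ γ)) := by ring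
        _ = C * ENNReal.ofReal (u ^ c) := by
            rw [← ENNReal.ofReal_mul (Real.rpow_nonneg hu0.le _), ← Real.rpow_add hu0, hc]
    rw [lintegral_Ioi_rpow_of_lt' hlt hapos] at key
    refine key.trans (le_of_eq ?_)
    have hne : c + 1 < 0 := by linarith
    rw [show -a ^ (c+1) / (c+1) = (-1/(c+1)) * a ^ (c+1) from by ring,
      ENNReal.ofReal_mul (le_of_lt (div_pos_of_neg_of_neg (by norm_num) hne)),
      mul_assoc]
    congr 2
    push_cast
    rw [← hcsum]

theorem first_integral_finite (k : ℕ) (hk : 1 ≤ k) (β : ℕ → ℝ) (s₁ : ℕ)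
    (hs₁mem : s₁ ∈ Finset.range (k + 1))
    (hs₁max : ∀ s ∈ Finset.range (k + 1), maxF k β s ≤ maxF k β s₁)
    (hs₁min : ∀ s ∈ Finset.range (k + 1), maxF k β s = maxF k β s₁ → s₁ ≤ s)
    (hs₁pos : 1 ≤ s₁) :
    nestIoi β s₁ 1 1 < ⊤ := by
  have hs₁k : s₁ ≤ k := by simpa [Finset.mem_range, Nat.lt_succ_iff] using hs₁mem
  have hcond : ∀ m, m < s₁ →
      (∑ i ∈ Finset.Icc (1 + m) (1 + s₁ - 1), β i) + ((s₁ : ℝ) - m) < 0 := by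
    intro m hm
    have hmmem : m ∈ Finset.range (k + 1) := by
      simp only [Finset.mem_range]; omega
    have hlt : maxF k β m < maxF k β s₁ := by
      rcases lt_or_eq_of_le (hs₁max m hmmem) with h | h
      · exact h
      · exact absurd (hs₁min m hmmem h) (by omega)
    unfold maxF at hlt
    rw [Finset.Icc_add_one_left_eq_Ioc, Finset.Icc_add_one_left_eq_Ioc] at hlt
    have hsplit := sum_Ioc_split β (le_of_lt hm) hs₁k
    have hIcc : Finset.Icc (1 + m) (1 + s₁ - 1) = Finset.Ioc m s₁ := by
      rw [Icc_eq_Ioc_pred (by omega)]; congr 1 <;> omega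
    rw [hIcc]
    linarith
  obtain ⟨C, hC, hbound⟩ := nestIoi_bound β s₁ 1 le_rfl hcond
  have := hbound 1 le_rfl
  rw [Real.one_rpow, ENNReal.ofReal_one, mul_one] at this
  exact lt_of_le_of_lt this hC
end

section
/- Let χ ∈ (1/2, 1) be a real number and define, for t ≥ 1, T(t) = ∫₁^t u^{2χ−2} ( ∫_u^t v^{−1} ( ∫_v^t w^{−2χ} dw ) dv ) du. Then lim_{t→∞} T(t) / log t = 1/(2χ−1)². -/
/-!
With `a = 2χ - 1`, every layer of the triple integral has an elementary antiderivative, and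
`T(t) = (1 + t^(-a)) log t / a² + 2 (t^(-a) - 1) / a³` exactly. For `a > 0` the term
`t^(-a)` vanishes at infinity, so only `log t / a²` survives division by `log t`.
-/

open Real MeasureTheory intervalIntegral Filter Topology

noncomputable def triangleIntegral (a t : ℝ) : ℝ :=
  ∫ u in (1:ℝ)..t, u ^ (a - 1) * ∫ v in u..t, v ^ (-1 : ℝ) * ∫ w in v..t, w ^ (-(a + 1))

lemma pos_of_mem_uIcc {x y z : ℝ} (hx : 0 < x) (hy : 0 < y) (hz : z ∈ Set.uIcc x y) : 0 < z :=
  (lt_min hx hy).trans_le hz.1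

lemma continuousOn_rpow_const_uIcc {x y : ℝ} (hx : 0 < x) (hy : 0 < y) (p : ℝ) :
    ContinuousOn (fun z : ℝ => z ^ p) (Set.uIcc x y) :=
  continuousOn_id.rpow_const fun _ hz => Or.inl (pos_of_mem_uIcc hx hy hz).ne'

lemma rpow_mul_rpow_neg {x : ℝ} (hx : 0 < x) (a : ℝ) : x ^ a * x ^ (-a) = 1 := by
  rw [← rpow_add hx, add_neg_cancel, rpow_zero]

section

variable {a t : ℝ}

lemma integral_rpow_neg_add_one (ha : a ≠ 0) {v : ℝ} (hv : 0 < v) (ht : 0 < t) :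
    ∫ w in v..t, w ^ (-(a + 1)) = (v ^ (-a) - t ^ (-a)) / a := by
  have hne : -(a + 1) ≠ -1 := fun h => ha (by linarith)
  rw [integral_rpow (Or.inr ⟨hne, Set.notMem_uIcc_of_lt hv ht⟩),
    show -(a + 1) + 1 = -a by ring]
  field_simp
  ring

lemma integral_inv_mul_integral_rpow (ha : a ≠ 0) {u : ℝ} (hu : 0 < u) (ht : 0 < t) :
    ∫ v in u..t, v ^ (-1 : ℝ) * ∫ w in v..t, w ^ (-(a + 1)) =
      (u ^ (-a) - t ^ (-a)) / a ^ 2 - t ^ (-a) * (log t - log u) / a := by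
  have hpos : ∀ v ∈ Set.uIcc u t, 0 < v := fun v => pos_of_mem_uIcc hu ht
  have hderiv : ∀ v ∈ Set.uIcc u t,
      HasDerivAt (fun v => -(v ^ (-a) / a ^ 2 + t ^ (-a) * log v / a))
      (v ^ (-1 : ℝ) * ((v ^ (-a) - t ^ (-a)) / a)) v := by
    intro v hv
    have hv0 := hpos v hv
    refine (((hasDerivAt_rpow_const (p := -a) (Or.inl hv0.ne')).div_const (a ^ 2)).add
      (((hasDerivAt_log hv0.ne').const_mul (t ^ (-a))).div_const a)).neg.congr_deriv ?_
    rw [rpow_sub_one hv0.ne', rpow_neg_one]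
    field_simp
    ring
  have hinner : Set.EqOn (fun v => v ^ (-1 : ℝ) * ∫ w in v..t, w ^ (-(a + 1)))
      (fun v => v ^ (-1 : ℝ) * ((v ^ (-a) - t ^ (-a)) / a)) (Set.uIcc u t) := fun v hv => by
    simp only [integral_rpow_neg_add_one ha (hpos v hv) ht]
  rw [integral_congr hinner, integral_eq_sub_of_hasDerivAt hderiv]
  · ring
  · have hrpow := continuousOn_rpow_const_uIcc hu ht
    exact ((hrpow _).mul (((hrpow _).sub continuousOn_const).div_const a)).intervalIntegrable

lemma triangleIntegral_eq (ha : a ≠ 0) (ht : 0 < t) :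
    triangleIntegral a t = (log t + t ^ (-a) * log t) / a ^ 2 + 2 * (t ^ (-a) - 1) / a ^ 3 := by
  have hpos : ∀ u ∈ Set.uIcc 1 t, 0 < u := fun u => pos_of_mem_uIcc one_pos ht
  have hmiddle : Set.EqOn
      (fun u => u ^ (a - 1) * ∫ v in u..t, v ^ (-1 : ℝ) * ∫ w in v..t, w ^ (-(a + 1)))
      (fun u => u ^ (a - 1) * ((u ^ (-a) - t ^ (-a)) / a ^ 2 - t ^ (-a) * (log t - log u) / a))
      (Set.uIcc 1 t) := fun u hu => by
    simp only [integral_inv_mul_integral_rpow ha (hpos u hu) ht]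
  have hderiv : ∀ u ∈ Set.uIcc 1 t, HasDerivAt
      (fun u => (log u + t ^ (-a) * u ^ a * (log u - log t)) / a ^ 2 - 2 * t ^ (-a) * u ^ a / a ^ 3)
      (u ^ (a - 1) * ((u ^ (-a) - t ^ (-a)) / a ^ 2 - t ^ (-a) * (log t - log u) / a)) u := by
    intro u hu
    have hu0 := hpos u hu
    have hlog := hasDerivAt_log hu0.ne'
    have hpow := hasDerivAt_rpow_const (p := a) (Or.inl hu0.ne')
    refine (((hlog.add (((hpow.const_mul (t ^ (-a))).mul (hlog.sub_const (log t))))).div_const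
      (a ^ 2)).sub ((hpow.const_mul (2 * t ^ (-a))).div_const (a ^ 3))).congr_deriv ?_
    have hpow' : u ^ a * u⁻¹ = u ^ (a - 1) := by rw [rpow_sub_one hu0.ne', div_eq_mul_inv]
    rw [← hpow']
    field_simp
    linear_combination (-1) * rpow_mul_rpow_neg hu0 a
  rw [triangleIntegral, integral_congr hmiddle, integral_eq_sub_of_hasDerivAt hderiv]
  · simp only [log_one, one_rpow]
    linear_combination (-2 / a ^ 3) * rpow_mul_rpow_neg ht a
  · have hrpow := continuousOn_rpow_const_uIcc one_pos ht
    have hlog : ContinuousOn log (Set.uIcc 1 t) := continuousOn_log.mono fun u hu => (hpos u hu).ne'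
    exact ((hrpow _).mul ((((hrpow _).sub continuousOn_const).div_const _).sub
      ((continuousOn_const.mul (continuousOn_const.sub hlog)).div_const _))).intervalIntegrable

lemma tendsto_triangleIntegral_div_log (ha : 0 < a) :
    Tendsto (fun t => triangleIntegral a t / log t) atTop (𝓝 (1 / a ^ 2)) := by
  have hclosed : (fun t => 1 / a ^ 2 + t ^ (-a) / a ^ 2 + 2 * (t ^ (-a) - 1) / a ^ 3 * (log t)⁻¹)
      =ᶠ[atTop] fun t => triangleIntegral a t / log t := by
    filter_upwards [eventually_gt_atTop 1] with t ht
    have hlog : log t ≠ 0 := (log_pos ht).ne'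
    rw [triangleIntegral_eq ha.ne' (one_pos.trans ht)]
    field_simp
  have hdecay : Tendsto (fun t : ℝ => t ^ (-a)) atTop (𝓝 0) := tendsto_rpow_neg_atTop ha
  have hlim := (((tendsto_const_nhds (x := 1 / a ^ 2)).add (hdecay.div_const (a ^ 2))).add
    ((((hdecay.sub_const 1).const_mul 2).div_const (a ^ 3)).mul
      tendsto_log_atTop.inv_tendsto_atTop))
  convert hlim.congr' hclosed using 2
  ring

end

theorem triangle_integral_tau_gt_three_general (χ : ℝ) (h1 : 1 / 2 < χ) :
    Filter.Tendsto
      (fun t : ℝ =>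
        (∫ u in (1:ℝ)..t, u ^ (2 * χ - 2) *
          ∫ v in u..t, v ^ (-1 : ℝ) *
            ∫ w in v..t, w ^ (-(2 * χ))) / Real.log t)
      Filter.atTop (nhds (1 / (2 * χ - 1) ^ 2)) := by
  have h := tendsto_triangleIntegral_div_log (a := 2 * χ - 1) (by linarith)
  simpa only [triangleIntegral, show 2 * χ - 1 - 1 = 2 * χ - 2 by ring,
    show -(2 * χ - 1 + 1) = -(2 * χ) by ring] using h

theorem triangle_integral_tau_gt_three (χ : ℝ) (h1 : 1 / 2 < χ) (h2 : χ < 1) :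
    Filter.Tendsto
      (fun t : ℝ =>
        (∫ u in (1:ℝ)..t, u ^ (2 * χ - 2) *
          ∫ v in u..t, v ^ (-1 : ℝ) *
            ∫ w in v..t, w ^ (-(2 * χ))) / Real.log t)
      Filter.atTop (nhds (1 / (2 * χ - 1) ^ 2)) :=
  triangle_integral_tau_gt_three_general χ h1
end

section
/- Fix an integer m ≥ 1 and a real δ > −m. Let ψ₂, ψ₃, … be independent random variables with ψ_k distributed as Beta(m+δ, m(2k−3)+(k−1)δ). Then for every ε > 0 there exists ω = ω(ε) ∈ (0,1) such that for every integer t ≥ 2: P( max_{i∈{2,…,t}} ψ_i < ω ) ≥ 1 − ε. -/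
/-!
A union bound over all `k ≥ 2` at once gives, uniformly in `t`,
`P (∃ i ∈ [2, t], ψ i ≥ ω) ≤ ν [ω, ∞)` for the measure `ν = ∑ₖ law (ψ (k + 2))`.
Markov's inequality for the second moment of `Beta(a, bₖ)`, which is `O(1 / k²)` because
`a + bₖ ≥ k a`, makes `ν [1/2, ∞)` finite, and `ν [1, ∞) = 0` since every `ψ k < 1` a.s.;
continuity of `ν` from above then yields `ω < 1` with `ν [ω, ∞) ≤ ε`.
-/

open Real MeasureTheory ProbabilityTheory Finset

/-- The Beta(a,b) distribution: the measure on ℝ supported on (0,1) with density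
`x^(a-1) (1-x)^(b-1) / B(a,b)` where `B(a,b) = Γ(a)Γ(b)/Γ(a+b)`. -/
noncomputable def betaMeasure (a b : ℝ) : Measure ℝ :=
  MeasureTheory.volume.withDensity
    (Set.indicator (Set.Ioo 0 1) fun x =>
      ENNReal.ofReal (x ^ (a - 1) * (1 - x) ^ (b - 1) /
        (Real.Gamma a * Real.Gamma b / Real.Gamma (a + b))))

open Filter
open scoped ENNReal Topology

lemma tendsto_measure_Ici_sub (μ : Measure ℝ) {b r₀ : ℝ} (hr₀ : 0 < r₀)
    (hfin : μ (Set.Ici (b - r₀)) ≠ ∞) :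
    Tendsto (fun r ↦ μ (Set.Ici (b - r))) (𝓝[>] 0) (𝓝 (μ (Set.Ici b))) := by
  have hinter : ⋂ r > (0 : ℝ), Set.Ici (b - r) = Set.Ici b := by
    ext x
    simp only [Set.mem_iInter, Set.mem_Ici, sub_le_iff_le_add]
    exact ⟨le_of_forall_pos_le_add, fun hx r hr ↦ by linarith⟩
  rw [← hinter]
  exact tendsto_measure_biInter_gt (fun _ _ ↦ measurableSet_Ici.nullMeasurableSet)
    (fun i j _ hij ↦ Set.Ici_subset_Ici.2 (by linarith)) ⟨r₀, hr₀, hfin⟩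

lemma exists_mem_Ioo_measure_Ici_le (μ : Measure ℝ) {c b : ℝ} (hcb : c < b)
    (hfin : μ (Set.Ici c) ≠ ∞) (hnull : μ (Set.Ici b) = 0) {ε : ℝ≥0∞} (hε : 0 < ε) :
    ∃ ω ∈ Set.Ioo c b, μ (Set.Ici ω) ≤ ε := by
  have hlim := tendsto_measure_Ici_sub μ (sub_pos.2 hcb) (by rwa [sub_sub_cancel])
  rw [hnull] at hlim
  obtain ⟨r, hr, hsmall⟩ :=
    (Filter.Eventually.and (Ioo_mem_nhdsGT (sub_pos.2 hcb)) (hlim.eventually_le_const hε)).exists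
  exact ⟨b - r, ⟨by linarith [hr.2], by linarith [hr.1]⟩, hsmall⟩

lemma one_sub_tsum_measure_compl_le_measure_iInter {Ω ι : Type*} [MeasurableSpace Ω]
    [Countable ι] (P : Measure Ω) [IsProbabilityMeasure P] (s : ι → Set Ω) :
    1 - ∑' i, P (s i)ᶜ ≤ P (⋂ i, s i) := by
  rw [tsub_le_iff_right, ← measure_univ (μ := P)]
  calc P Set.univ ≤ P (⋂ i, s i) + P (⋂ i, s i)ᶜ := measure_univ_le_add_compl _
    _ ≤ P (⋂ i, s i) + ∑' i, P (s i)ᶜ := by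
      rw [Set.compl_iInter]
      gcongr
      exact measure_iUnion_le _

namespace ProbabilityTheory

lemma measurable_betaPDF (α β : ℝ) : Measurable (betaPDF α β) :=
  (measurable_betaPDFReal α β).ennreal_ofReal

lemma betaMeasure_Ici_one (α β : ℝ) : betaMeasure α β (Set.Ici 1) = 0 := by
  rw [betaMeasure, withDensity_apply _ measurableSet_Ici]
  exact setLIntegral_eq_zero measurableSet_Ici fun _ hx ↦ betaPDF_eq_zero_of_one_le hx

lemma beta_add_two {α β : ℝ} (hα : 0 < α) (hβ : 0 < β) :
    beta (α + 2) β = α * (α + 1) / ((α + β) * (α + β + 1)) * beta α β := by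
  have hΓα : Real.Gamma (α + 2) = (α + 1) * (α * Real.Gamma α) := by
    rw [show α + 2 = α + 1 + 1 by ring, Real.Gamma_add_one (by positivity),
      Real.Gamma_add_one hα.ne']
  have hΓαβ : Real.Gamma (α + 2 + β) = (α + β + 1) * ((α + β) * Real.Gamma (α + β)) := by
    rw [show α + 2 + β = α + β + 1 + 1 by ring, Real.Gamma_add_one (by positivity),
      Real.Gamma_add_one (by positivity)]
  have := Real.Gamma_pos_of_pos (add_pos hα hβ)
  simp only [beta, hΓα, hΓαβ]
  field_simp

/-- On `[ω, 1)` the factor `x²` of the `Beta(α + 2, β)` density is at least `ω²`. -/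
lemma betaPDF_le_mul_betaPDF_add_two {α β ω x : ℝ} (hα : 0 < α) (hβ : 0 < β) (hω : 0 < ω)
    (hx : ω ≤ x) :
    betaPDF α β x ≤
      ENNReal.ofReal (beta (α + 2) β / (beta α β * ω ^ 2)) * betaPDF (α + 2) β x := by
  rcases lt_or_ge x 1 with hx1 | hx1
  · have hx0 : 0 < x := hω.trans_le hx
    have hBα := beta_pos hα hβ
    have hBα2 := beta_pos (by positivity : 0 < α + 2) hβ
    rw [betaPDF_of_pos_lt_one hx0 hx1, betaPDF_of_pos_lt_one hx0 hx1,
      ← ENNReal.ofReal_mul (by positivity)]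
    refine ENNReal.ofReal_le_ofReal ?_
    have hpow : x ^ (α + 2 - 1) = x ^ (α - 1) * x ^ 2 := by
      rw [show α + 2 - 1 = α - 1 + 2 by ring, Real.rpow_add hx0, Real.rpow_two]
    have hsq : ω ^ 2 ≤ x ^ 2 := pow_le_pow_left₀ hω.le hx 2
    have h1x : 0 ≤ (1 - x) ^ (β - 1) := Real.rpow_nonneg (by linarith) _
    have hxα : 0 ≤ x ^ (α - 1) := Real.rpow_nonneg hx0.le _
    rw [hpow]
    calc 1 / beta α β * x ^ (α - 1) * (1 - x) ^ (β - 1)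
        = 1 / (beta α β * ω ^ 2) * x ^ (α - 1) * ω ^ 2 * (1 - x) ^ (β - 1) := by
          field_simp
      _ ≤ 1 / (beta α β * ω ^ 2) * x ^ (α - 1) * x ^ 2 * (1 - x) ^ (β - 1) := by gcongr
      _ = _ := by field_simp
  · simp [betaPDF_eq_zero_of_one_le hx1]

/-- Markov's inequality for the second moment `α (α + 1) / ((α + β) (α + β + 1))`. -/
lemma betaMeasure_Ici_le {α β ω : ℝ} (hα : 0 < α) (hβ : 0 < β) (hω : 0 < ω) :
    betaMeasure α β (Set.Ici ω) ≤
      ENNReal.ofReal (α * (α + 1) / ((α + β) * (α + β + 1) * ω ^ 2)) := by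
  have hB := beta_pos hα hβ
  calc betaMeasure α β (Set.Ici ω)
      = ∫⁻ x in Set.Ici ω, betaPDF α β x := withDensity_apply _ measurableSet_Ici
    _ ≤ ∫⁻ x in Set.Ici ω, ENNReal.ofReal (beta (α + 2) β / (beta α β * ω ^ 2)) *
          betaPDF (α + 2) β x :=
        setLIntegral_mono' measurableSet_Ici fun x hx ↦ betaPDF_le_mul_betaPDF_add_two hα hβ hω hx
    _ ≤ ∫⁻ x, ENNReal.ofReal (beta (α + 2) β / (beta α β * ω ^ 2)) *
          betaPDF (α + 2) β x := setLIntegral_le_lintegral _ _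
    _ = ENNReal.ofReal (beta (α + 2) β / (beta α β * ω ^ 2)) := by
        rw [lintegral_const_mul _ (measurable_betaPDF (α + 2) β),
          lintegral_betaPDF_eq_one (by positivity) hβ, mul_one]
    _ = ENNReal.ofReal (α * (α + 1) / ((α + β) * (α + β + 1) * ω ^ 2)) := by
        rw [beta_add_two hα hβ]
        congr 1
        field_simp

lemma tsum_betaMeasure_Ici_ne_top {α ω : ℝ} {β : ℕ → ℝ} (hα : 0 < α) (hω : 0 < ω)
    (hβ : ∀ k, 0 < β k) (hgrowth : ∀ k : ℕ, (k + 1) * α ≤ α + β k) :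
    ∑' k, betaMeasure α (β k) (Set.Ici ω) ≠ ∞ := by
  have hterm (k : ℕ) : betaMeasure α (β k) (Set.Ici ω) ≤
      ENNReal.ofReal ((α + 1) / (α * ω ^ 2) * (1 / ((k + 1 : ℕ) : ℝ) ^ 2)) := by
    refine (betaMeasure_Ici_le hα (hβ k) hω).trans (ENNReal.ofReal_le_ofReal ?_)
    have hk : (0 : ℝ) < k + 1 := by positivity
    have hβk := hβ k
    calc α * (α + 1) / ((α + β k) * (α + β k + 1) * ω ^ 2)
        ≤ α * (α + 1) / (((k + 1) * α) ^ 2 * ω ^ 2) := by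
          gcongr
          nlinarith [mul_le_mul (hgrowth k) (hgrowth k) (by positivity) (by positivity)]
      _ = (α + 1) / (α * ω ^ 2) * (1 / ((k + 1 : ℕ) : ℝ) ^ 2) := by
          push_cast
          field_simp
  have hsum : Summable fun k : ℕ ↦ (α + 1) / (α * ω ^ 2) * (1 / ((k + 1 : ℕ) : ℝ) ^ 2) :=
    ((summable_nat_add_iff 1).2 (Real.summable_one_div_nat_pow.2 one_lt_two)).mul_left _
  refine ne_top_of_le_ne_top ?_ (ENNReal.tsum_le_tsum hterm)
  rw [← ENNReal.ofReal_tsum_of_nonneg (fun k ↦ by positivity) hsum]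
  exact ENNReal.ofReal_ne_top

end ProbabilityTheory

theorem betaMeasure_eq_probabilityTheory_betaMeasure (a b : ℝ) :
    _root_.betaMeasure a b = ProbabilityTheory.betaMeasure a b := by
  refine congrArg volume.withDensity (funext fun x ↦ ?_)
  rw [betaPDF_eq]
  by_cases hx : 0 < x ∧ x < 1
  · rw [Set.indicator_of_mem (s := Set.Ioo 0 1) hx, if_pos hx, beta]
    congr 1
    ring
  · rw [Set.indicator_of_notMem (s := Set.Ioo 0 1) hx, if_neg hx, ENNReal.ofReal_zero]

/-- `m (2k - 3) + (k - 1) δ = (k - 1)(m + δ) + (k - 2) m`, here with `k + 2` in place of `k`. -/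
lemma intensity_shape_bounds {m δ : ℝ} (hm : 0 ≤ m) (hmδ : 0 < m + δ) (k : ℕ) :
    0 < m * (2 * ((k + 2 : ℕ) : ℝ) - 3) + (((k + 2 : ℕ) : ℝ) - 1) * δ ∧
      (k + 1) * (m + δ) ≤
        (m + δ) + (m * (2 * ((k + 2 : ℕ) : ℝ) - 3) + (((k + 2 : ℕ) : ℝ) - 1) * δ) := by
  have hk := k.cast_nonneg (α := ℝ)
  push_cast
  constructor <;> nlinarith

theorem maximum_intensity_general {Ω : Type*} [MeasurableSpace Ω]
    (P : Measure Ω) [IsProbabilityMeasure P]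
    (m : ℕ) (δ : ℝ) (hδ : -(m : ℝ) < δ)
    (ψ : ℕ → Ω → ℝ) (hmeas : ∀ k, Measurable (ψ k))
    (hdist : ∀ k : ℕ, 2 ≤ k →
      Measure.map (ψ k) P =
        _root_.betaMeasure ((m : ℝ) + δ) ((m : ℝ) * (2 * (k : ℝ) - 3) + ((k : ℝ) - 1) * δ)) :
    ∀ ε : ℝ, 0 < ε → ∃ ω : ℝ, ω ∈ Set.Ioo (0 : ℝ) 1 ∧ ∀ t : ℕ, 2 ≤ t →
      ENNReal.ofReal (1 - ε) ≤ P {a | ∀ i ∈ Finset.Icc 2 t, ψ i a < ω} := by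
  intro ε hε
  have hmδ : 0 < (m : ℝ) + δ := by linarith
  have hshape := intensity_shape_bounds (m.cast_nonneg (α := ℝ)) hmδ
  set ν := Measure.sum fun k ↦ P.map (ψ (k + 2))
  have hν (ω : ℝ) : ν (Set.Ici ω) = ∑' k : ℕ, ProbabilityTheory.betaMeasure ((m : ℝ) + δ)
      ((m : ℝ) * (2 * ((k + 2 : ℕ) : ℝ) - 3) + (((k + 2 : ℕ) : ℝ) - 1) * δ) (Set.Ici ω) := by
    rw [Measure.sum_apply _ measurableSet_Ici]
    simp only [hdist _ (Nat.le_add_left 2 _), betaMeasure_eq_probabilityTheory_betaMeasure]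
  obtain ⟨ω, hω, hνω⟩ := exists_mem_Ioo_measure_Ici_le ν (by norm_num : (1 / 2 : ℝ) < 1)
    (by
      rw [hν]
      exact tsum_betaMeasure_Ici_ne_top hmδ (by norm_num) (fun k ↦ (hshape k).1)
        fun k ↦ (hshape k).2)
    (by simp [hν, betaMeasure_Ici_one]) (ENNReal.ofReal_pos.2 hε)
  refine ⟨ω, ⟨by linarith [hω.1], hω.2⟩, fun t _ ↦ ?_⟩
  calc ENNReal.ofReal (1 - ε) ≤ 1 - ν (Set.Ici ω) := by
        rw [ENNReal.ofReal_sub _ hε.le, ENNReal.ofReal_one]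
        gcongr
    _ = 1 - ∑' k, P (ψ (k + 2) ⁻¹' Set.Iio ω)ᶜ := by
        rw [Measure.sum_apply _ measurableSet_Ici]
        simp only [Measure.map_apply (hmeas _) measurableSet_Ici, ← Set.preimage_compl,
          Set.compl_Iio]
    _ ≤ P (⋂ k, ψ (k + 2) ⁻¹' Set.Iio ω) := one_sub_tsum_measure_compl_le_measure_iInter P _
    _ ≤ P {a | ∀ i ∈ Finset.Icc 2 t, ψ i a < ω} := measure_mono fun x hx i hi ↦ by
        obtain ⟨k, rfl⟩ : ∃ k, i = k + 2 := ⟨i - 2, by grind⟩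
        exact Set.mem_iInter.1 hx k

theorem maximum_intensity {Ω : Type*} [MeasurableSpace Ω]
    (P : Measure Ω) [IsProbabilityMeasure P]
    (m : ℕ) (hm : 1 ≤ m) (δ : ℝ) (hδ : -(m : ℝ) < δ)
    (ψ : ℕ → Ω → ℝ) (hmeas : ∀ k, Measurable (ψ k))
    (hindep : ProbabilityTheory.iIndepFun (fun k : ℕ => ψ (k + 2)) P)
    (hdist : ∀ k : ℕ, 2 ≤ k →
      Measure.map (ψ k) P =
        _root_.betaMeasure ((m : ℝ) + δ) ((m : ℝ) * (2 * (k : ℝ) - 3) + ((k : ℝ) - 1) * δ)) :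
    ∀ ε : ℝ, 0 < ε → ∃ ω : ℝ, ω ∈ Set.Ioo (0 : ℝ) 1 ∧ ∀ t : ℕ, 2 ≤ t →
      ENNReal.ofReal (1 - ε) ≤ P {a | ∀ i ∈ Finset.Icc 2 t, ψ i a < ω} :=
  maximum_intensity_general P m δ hδ ψ hmeas hdist
end
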